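/- Let μ be a nonzero σ-finite measure on a measurable space. Then the following are equivalent: (i) for every f ∈ L¹(μ) there exists g ∈ L¹(μ) with ‖f + g‖₁ = ‖f − g‖₁ = ‖f‖₁ = ‖g‖₁; (ii) μ is atomless. -/

import Mathlib

/-!
If `A` is an atom, every `g ∈ L¹` is a.e. equal to a constant `c` on `A`, so for `f = 1_A` the
norm equation reduces to `‖1 + c‖ = ‖1 - c‖ = ‖c‖`, which the parallelogram law forbids.

If `μ` is atomless, so is the finite measure `|f| μ`, and Sierpiński's theorem gives a set `S`
carrying exactly half of it. Then `g = f` on `S`, `g = -f` off `S` solves the equation: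
`f + g = 2 f 1_S` and `f - g = 2 f 1_{Sᶜ}`. Sierpiński's theorem is proved greedily: take
an increasing sequence of sets of measure `≤ t`, each nearly maximal among the admissible
supersets of the previous one. If the union had measure `< t`, a small subset of its complement
could have been added at every stage, which near-maximality forbids.
-/

open MeasureTheory

def IsMeasureAtom {α : Type*} [MeasurableSpace α] (μ : Measure α) (A : Set α) : Prop :=
  MeasurableSet A ∧ 0 < μ A ∧ μ A < ⊤ ∧
    ∀ B, B ⊆ A → MeasurableSet B → μ B = 0 ∨ μ B = μ A

open Set Filter
open scoped ENNReal

def SolvesNormEquation {E : Type*} [Norm E] [Add E] [Sub E] (f g : E) : Prop :=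
  ‖f + g‖ = ‖f‖ ∧ ‖f - g‖ = ‖f‖ ∧ ‖g‖ = ‖f‖

section Atoms

variable {α : Type*} [MeasurableSpace α] {μ ν : Measure α} {A B S : Set α}

namespace IsMeasureAtom

protected lemma measurableSet (hA : IsMeasureAtom μ A) : MeasurableSet A := hA.1

lemma measure_ne_zero (hA : IsMeasureAtom μ A) : μ A ≠ 0 := hA.2.1.ne'

lemma measure_ne_top (hA : IsMeasureAtom μ A) : μ A ≠ ∞ := hA.2.2.1.ne

lemma measure_eq_zero_or_eq (hA : IsMeasureAtom μ A) (hBA : B ⊆ A) (hB : MeasurableSet B) :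
    μ B = 0 ∨ μ B = μ A :=
  hA.2.2.2 B hBA hB

lemma measure_sdiff_eq_zero (hA : IsMeasureAtom μ A) (hBA : B ⊆ A) (hB : MeasurableSet B)
    (hμB : μ B = μ A) : μ (A \ B) = 0 := by
  rw [measure_sdiff hBA hB.nullMeasurableSet (hμB ▸ hA.measure_ne_top), hμB, tsub_self]

lemma of_subset (hA : IsMeasureAtom μ A) (hBA : B ⊆ A) (hB : MeasurableSet B) (hB0 : μ B ≠ 0) :
    IsMeasureAtom μ B := by
  have hμB : μ B = μ A := (hA.measure_eq_zero_or_eq hBA hB).resolve_left hB0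
  exact ⟨hB, pos_iff_ne_zero.2 hB0, hμB ▸ hA.measure_ne_top.lt_top,
    fun C hCB hC => hμB ▸ hA.measure_eq_zero_or_eq (hCB.trans hBA) hC⟩

lemma of_null_iff (hA : IsMeasureAtom ν A) (hμA : μ A ≠ ∞)
    (hnull : ∀ B ⊆ A, MeasurableSet B → (μ B = 0 ↔ ν B = 0)) : IsMeasureAtom μ A := by
  refine ⟨hA.measurableSet,
    pos_iff_ne_zero.2 fun h => hA.measure_ne_zero ((hnull A subset_rfl hA.measurableSet).1 h),
    hμA.lt_top, fun B hBA hB => (hA.measure_eq_zero_or_eq hBA hB).imp (hnull B hBA hB).2 ?_⟩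
  intro hνB
  exact measure_eq_measure_of_null_sdiff hBA ((hnull _ sdiff_subset (hA.measurableSet.diff hB)).2
    (hA.measure_sdiff_eq_zero hBA hB hνB))

lemma measure_inter_eq_zero_or_measure_sdiff_eq_zero (hA : IsMeasureAtom μ A)
    (hB : MeasurableSet B) : μ (A ∩ B) = 0 ∨ μ (A \ B) = 0 := by
  have hAB := hA.measurableSet.inter hB
  refine (hA.measure_eq_zero_or_eq inter_subset_left hAB).imp_right fun h => ?_
  simpa using hA.measure_sdiff_eq_zero inter_subset_left hAB h

lemma exists_ae_eq_const {X : Type*} [Nonempty X] [MeasurableSpace X]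
    [MeasurableSpace.CountablySeparated X] (hA : IsMeasureAtom μ A) {g : α → X}
    (hg : Measurable g) : ∃ c, g =ᵐ[μ.restrict A] fun _ => c := by
  refine exists_eventuallyEq_const_of_forall_separating MeasurableSet fun U hU => ?_
  rcases hA.measure_inter_eq_zero_or_measure_sdiff_eq_zero (hg hU) with h | h
  · right
    change (g ⁻¹' U)ᶜ ∈ ae (μ.restrict A)
    rwa [mem_ae_iff, compl_compl, Measure.restrict_apply (hg hU), inter_comm]
  · left
    change g ⁻¹' U ∈ ae (μ.restrict A)
    rwa [mem_ae_iff, Measure.restrict_apply (hg hU).compl, inter_comm, ← sdiff_eq]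

end IsMeasureAtom

lemma not_isMeasureAtom_withDensity (hμ : ∀ A, ¬ IsMeasureAtom μ A) {h : α → ℝ≥0∞}
    (hh : Measurable h) (A : Set α) : ¬ IsMeasureAtom (μ.withDensity h) A := by
  intro hA
  set ν := μ.withDensity h
  -- on `A ∩ {n⁻¹ ≤ h}` the measures `μ` and `ν` have the same null sets
  set A' : ℕ → Set α := fun n => A ∩ {x | (n : ℝ≥0∞)⁻¹ ≤ h x}
  have hA' : ∀ n, MeasurableSet (A' n) :=
    fun n => hA.measurableSet.inter (measurableSet_le measurable_const hh)
  have hbound : ∀ n, ∀ B ⊆ A' n, MeasurableSet B → (n : ℝ≥0∞)⁻¹ * μ B ≤ ν B := by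
    intro n B hB hBm
    rw [withDensity_apply h hBm, ← setLIntegral_const]
    exact setLIntegral_mono hh fun x hx => (hB hx).2
  have hinv : ∀ n : ℕ, (n : ℝ≥0∞)⁻¹ ≠ 0 :=
    fun n => ENNReal.inv_ne_zero.2 (ENNReal.natCast_ne_top n)
  obtain ⟨n, hn⟩ : ∃ n, ν (A' n) ≠ 0 := by
    by_contra! hnull
    have hzero : ν (A ∩ h ⁻¹' {0}) = 0 := by
      have hm : MeasurableSet (A ∩ h ⁻¹' {0}) :=
        hA.measurableSet.inter (hh (measurableSet_singleton 0))
      rw [withDensity_apply h hm]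
      exact setLIntegral_eq_zero hm fun x hx => hx.2
    have hcover : A ⊆ (A ∩ h ⁻¹' {0}) ∪ ⋃ n, A' n := fun x hx => by
      by_cases hx0 : h x = 0
      · exact Or.inl ⟨hx, hx0⟩
      · obtain ⟨n, hn⟩ := ENNReal.exists_inv_nat_lt hx0
        exact Or.inr (mem_iUnion.2 ⟨n, hx, hn.le⟩)
    exact hA.measure_ne_zero
      (measure_mono_null hcover (measure_union_null hzero (measure_iUnion_null hnull)))
  refine hμ (A' n) ((hA.of_subset inter_subset_left (hA' n) hn).of_null_iff ?_ ?_)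
  · intro htop
    have := (hbound n _ subset_rfl (hA' n)).trans_lt
      (measure_lt_top_of_subset inter_subset_left hA.measure_ne_top)
    rw [htop, ENNReal.mul_top (hinv n)] at this
    exact lt_irrefl _ this
  · intro B hB hBm
    refine ⟨fun h0 => withDensity_absolutelyContinuous μ h h0, fun h0 => ?_⟩
    have := hbound n B hB hBm
    rw [h0, nonpos_iff_eq_zero, mul_eq_zero] at this
    exact this.resolve_left (hinv n)

lemma exists_subset_measure_ne_zero_le_half (hν : ∀ A, ¬ IsMeasureAtom ν A)
    (hS : MeasurableSet S) (h0 : ν S ≠ 0) (hfin : ν S ≠ ∞) :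
    ∃ B ⊆ S, MeasurableSet B ∧ ν B ≠ 0 ∧ ν B ≤ ν S / 2 := by
  obtain ⟨B, hBS, hB, hB0, hBS'⟩ : ∃ B ⊆ S, MeasurableSet B ∧ ν B ≠ 0 ∧ ν B ≠ ν S := by
    have := hν S
    simp only [IsMeasureAtom, not_and, not_forall, not_or] at this
    obtain ⟨B, hBS, hB, hB0, hBS'⟩ := this hS (pos_iff_ne_zero.2 h0) hfin.lt_top
    exact ⟨B, hBS, hB, hB0, hBS'⟩
  by_cases hhalf : ν B ≤ ν S / 2
  · exact ⟨B, hBS, hB, hB0, hhalf⟩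
  have hdiff : ν (S \ B) = ν S - ν B :=
    measure_sdiff hBS hB.nullMeasurableSet (ne_top_of_le_ne_top hfin (measure_mono hBS))
  refine ⟨S \ B, sdiff_subset, hS.diff hB, ?_, ?_⟩
  · rw [hdiff]
    exact (tsub_pos_of_lt ((measure_mono hBS).lt_of_ne hBS')).ne'
  · calc ν (S \ B) = ν S - ν B := hdiff
      _ ≤ ν S - ν S / 2 := tsub_le_tsub_left (not_le.1 hhalf).le _
      _ = ν S / 2 := ENNReal.sub_half hfin

lemma exists_subset_measure_ne_zero_le (hν : ∀ A, ¬ IsMeasureAtom ν A)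
    (hS : MeasurableSet S) (h0 : ν S ≠ 0) (hfin : ν S ≠ ∞) {ε : ℝ≥0∞} (hε : ε ≠ 0) :
    ∃ B ⊆ S, MeasurableSet B ∧ ν B ≠ 0 ∧ ν B ≤ ε := by
  have hpow : ∀ k : ℕ, ∃ B ⊆ S, MeasurableSet B ∧ ν B ≠ 0 ∧ ν B ≤ ν S * 2⁻¹ ^ k := by
    intro k
    induction k with
    | zero => exact ⟨S, subset_rfl, hS, h0, by simp⟩
    | succ k ih =>
      obtain ⟨B, hBS, hB, hB0, hBle⟩ := ih
      obtain ⟨C, hCB, hC, hC0, hCle⟩ := exists_subset_measure_ne_zero_le_half hν hB hB0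
        (ne_top_of_le_ne_top hfin (measure_mono hBS))
      refine ⟨C, hCB.trans hBS, hC, hC0, hCle.trans ?_⟩
      rw [pow_succ, ← mul_assoc, ENNReal.div_eq_inv_mul, mul_comm]
      exact mul_le_mul_left hBle _
  obtain ⟨k, hk⟩ := ENNReal.exists_inv_two_pow_lt (ENNReal.div_pos hε hfin).ne'
  obtain ⟨B, hBS, hB, hB0, hBle⟩ := hpow k
  exact ⟨B, hBS, hB, hB0, hBle.trans ((mul_le_mul_right hk.le _).trans ENNReal.mul_div_le)⟩

lemma exists_superset_nearly_maximal {t ε : ℝ≥0∞} (ht : t ≠ ∞) (hε : ε ≠ 0)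
    (hA : MeasurableSet A) (hAt : ν A ≤ t) :
    ∃ A', A ⊆ A' ∧ MeasurableSet A' ∧ ν A' ≤ t ∧
      ∀ B, A ⊆ B → MeasurableSet B → ν B ≤ t → ν B ≤ ν A' + ε := by
  set M := ⨆ (B : Set α) (_ : A ⊆ B ∧ MeasurableSet B ∧ ν B ≤ t), ν B
  have hle_M : ∀ B, A ⊆ B → MeasurableSet B → ν B ≤ t → ν B ≤ M :=
    fun B hAB hB hBt => le_iSup₂_of_le B ⟨hAB, hB, hBt⟩ le_rfl
  have hMt : M ≠ ∞ := ne_top_of_le_ne_top ht (iSup₂_le fun B hB => hB.2.2)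
  by_contra! h
  obtain ⟨C, hAC, hC, hCt, hlt⟩ := h A subset_rfl hA hAt
  have hAM : ν A + ε < M := hlt.trans_le (hle_M C hAC hC hCt)
  have hεt : ε ≠ ∞ := ne_top_of_le_ne_top hMt (le_add_self.trans hAM.le)
  have hM_le : M ≤ M - ε := iSup₂_le fun B ⟨hAB, hB, hBt⟩ => by
    obtain ⟨C, hBC, hC, hCt, hlt⟩ := h B hAB hB hBt
    exact ENNReal.le_sub_of_add_le_right hεt (hlt.le.trans (hle_M C hBC hC hCt))
  exact (ENNReal.sub_lt_self hMt (pos_of_gt hAM).ne' hε).not_ge hM_le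

lemma exists_monotone_nearly_maximal_seq (ν : Measure α) {t : ℝ≥0∞} (ht : t ≠ ∞) :
    ∃ A : ℕ → Set α, Monotone A ∧ (∀ n, MeasurableSet (A n) ∧ ν (A n) ≤ t) ∧
      ∀ n B, A n ⊆ B → MeasurableSet B → ν B ≤ t → ν B ≤ ν (A (n + 1)) + (n : ℝ≥0∞)⁻¹ := by
  have step : ∀ (n : ℕ) (A : {A : Set α // MeasurableSet A ∧ ν A ≤ t}),
      ∃ A' : {A : Set α // MeasurableSet A ∧ ν A ≤ t}, A.1 ⊆ A'.1 ∧
        ∀ B, A.1 ⊆ B → MeasurableSet B → ν B ≤ t → ν B ≤ ν A'.1 + (n : ℝ≥0∞)⁻¹ := by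
    intro n A
    obtain ⟨A', hAA', hA', hA't, hmax⟩ := exists_superset_nearly_maximal ht
      (ENNReal.inv_ne_zero.2 (ENNReal.natCast_ne_top n)) A.2.1 A.2.2
    exact ⟨⟨A', hA', hA't⟩, hAA', hmax⟩
  choose next hsub hmax using step
  let A : ℕ → {A : Set α // MeasurableSet A ∧ ν A ≤ t} :=
    fun n => Nat.rec ⟨∅, .empty, by simp⟩ next n
  exact ⟨fun n => (A n).1, monotone_nat_of_le_succ fun n => hsub n (A n), fun n => (A n).2,
    fun n => hmax n (A n)⟩

theorem exists_measurableSet_measure_eq [IsFiniteMeasure ν] (hν : ∀ A, ¬ IsMeasureAtom ν A)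
    {t : ℝ≥0∞} (ht : t ≤ ν univ) : ∃ S, MeasurableSet S ∧ ν S = t := by
  obtain ⟨A, hmono, hA, hmax⟩ :=
    exists_monotone_nearly_maximal_seq ν (ne_top_of_le_ne_top (measure_ne_top ν univ) ht)
  set U := ⋃ n, A n
  have hU : MeasurableSet U := .iUnion fun n => (hA n).1
  have hUt : ν U ≤ t := by
    rw [hmono.measure_iUnion]
    exact iSup_le fun n => (hA n).2
  refine ⟨U, hU, hUt.antisymm (not_lt.1 fun hlt => ?_)⟩
  have hUc : ν Uᶜ ≠ 0 := by
    rw [measure_compl hU (measure_ne_top ν U)]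
    exact (tsub_pos_of_lt (hlt.trans_le ht)).ne'
  obtain ⟨C, hCU, hC, hC0, hCle⟩ := exists_subset_measure_ne_zero_le hν hU.compl hUc
    (measure_ne_top ν _) (tsub_pos_of_lt hlt).ne'
  have hUC : ν (U ∪ C) = ν U + ν C := measure_union (disjoint_compl_right.mono_right hCU) hC
  have hUCt : ν (U ∪ C) ≤ t := by
    calc ν (U ∪ C) = ν U + ν C := hUC
      _ ≤ ν U + (t - ν U) := by gcongr
      _ = t := add_tsub_cancel_of_le hUt
  have hC_le : ∀ n : ℕ, ν C ≤ (n : ℝ≥0∞)⁻¹ := by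
    intro n
    have := hmax n (U ∪ C) ((subset_iUnion A n).trans subset_union_left) (hU.union hC) hUCt
    rw [hUC] at this
    refine (ENNReal.add_le_add_iff_left (measure_ne_top ν U)).1 (this.trans ?_)
    gcongr
    exact subset_iUnion A (n + 1)
  obtain ⟨n, hn⟩ := ENNReal.exists_inv_nat_lt hC0
  exact (hC_le n).not_gt hn

end Atoms

section L1

variable {α : Type*} [MeasurableSpace α] {μ : Measure α} {A S : Set α}
  {E : Type*} [NormedAddCommGroup E]

lemma Lp.norm_eq_norm_of_lintegral_enorm_eq {F : Type*} [NormedAddCommGroup F] {u : Lp E 1 μ}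
    {v : Lp F 1 μ} (h : ∫⁻ x, ‖u x‖ₑ ∂μ = ∫⁻ x, ‖v x‖ₑ ∂μ) : ‖u‖ = ‖v‖ := by
  simp only [Lp.norm_def, eLpNorm_one_eq_lintegral_enorm, h]

lemma Lp.norm_eq_of_ae_restrict_eq_const (u : Lp E 1 μ) (hA : MeasurableSet A) {c : E}
    {v : α → ℝ} (hu : ∀ᵐ x ∂μ.restrict A, u x = c) (hv : ∀ᵐ x ∂μ.restrict Aᶜ, ‖u x‖ = v x) :
    ‖u‖ = ‖c‖ * μ.real A + ∫ x in Aᶜ, v x ∂μ := by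
  rw [L1.norm_eq_integral_norm, ← integral_add_compl hA (L1.integrable_coeFn u).norm,
    integral_congr_ae (hu.mono fun x hx => congrArg norm hx), integral_congr_ae hv,
    setIntegral_const, smul_eq_mul, mul_comm]

lemma exists_setLIntegral_enorm_eq_compl (hμ : ∀ A, ¬ IsMeasureAtom μ A) (f : Lp E 1 μ) :
    ∃ S, MeasurableSet S ∧ ∫⁻ x in S, ‖f x‖ₑ ∂μ = ∫⁻ x in Sᶜ, ‖f x‖ₑ ∂μ := by
  set ν := μ.withDensity fun x => ‖f x‖ₑ
  have : IsFiniteMeasure ν := isFiniteMeasure_withDensity <| by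
    rw [← eLpNorm_one_eq_lintegral_enorm]
    exact Lp.eLpNorm_ne_top f
  obtain ⟨S, hS, hνS⟩ := exists_measurableSet_measure_eq
    (not_isMeasureAtom_withDensity hμ (Lp.stronglyMeasurable f).enorm)
    (ENNReal.half_le_self (a := ν univ))
  refine ⟨S, hS, ?_⟩
  rw [← withDensity_apply _ hS, ← withDensity_apply _ hS.compl,
    measure_compl hS (measure_ne_top ν S), hνS, ENNReal.sub_half (measure_ne_top ν univ)]

lemma exists_solvesNormEquation_of_setLIntegral_eq [NormedSpace ℝ E] (f : Lp E 1 μ)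
    (hS : MeasurableSet S) (hhalf : ∫⁻ x in S, ‖f x‖ₑ ∂μ = ∫⁻ x in Sᶜ, ‖f x‖ₑ ∂μ) :
    ∃ g : Lp E 1 μ, SolvesNormEquation f g := by
  classical
  set g : α → E := S.piecewise f (-f)
  have hg : MemLp g 1 μ := (Lp.memLp f).restrict S |>.piecewise hS ((Lp.memLp f).neg.restrict Sᶜ)
  have hnorm : ∫⁻ x, ‖f x‖ₑ ∂μ = 2 * ∫⁻ x in S, ‖f x‖ₑ ∂μ := by
    rw [← lintegral_add_compl _ hS, ← hhalf, two_mul]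
  have hadd : ∀ x, ‖f x + g x‖ₑ = S.indicator (fun x => 2 * ‖f x‖ₑ) x := fun x => by
    by_cases hx : x ∈ S <;>
      simp [g, hx, ← two_smul ℝ (f x), enorm_smul, Real.enorm_eq_ofReal zero_le_two]
  have hsub : ∀ x, ‖f x - g x‖ₑ = Sᶜ.indicator (fun x => 2 * ‖f x‖ₑ) x := fun x => by
    by_cases hx : x ∈ S <;>
      simp [g, hx, ← two_smul ℝ (f x), enorm_smul, Real.enorm_eq_ofReal zero_le_two]
  refine ⟨hg.toLp g, Lp.norm_eq_norm_of_lintegral_enorm_eq ?_,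
    Lp.norm_eq_norm_of_lintegral_enorm_eq ?_, Lp.norm_eq_norm_of_lintegral_enorm_eq ?_⟩
  · calc ∫⁻ x, ‖(f + hg.toLp g) x‖ₑ ∂μ = ∫⁻ x, S.indicator (fun x => 2 * ‖f x‖ₑ) x ∂μ := by
          refine lintegral_congr_ae ?_
          filter_upwards [Lp.coeFn_add f (hg.toLp g), hg.coeFn_toLp] with x hfg hgx
          rw [hfg, Pi.add_apply, hgx, hadd]
      _ = ∫⁻ x, ‖f x‖ₑ ∂μ := by
          rw [lintegral_indicator hS, lintegral_const_mul' 2 _ ENNReal.ofNat_ne_top, hnorm]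
  · calc ∫⁻ x, ‖(f - hg.toLp g) x‖ₑ ∂μ = ∫⁻ x, Sᶜ.indicator (fun x => 2 * ‖f x‖ₑ) x ∂μ := by
          refine lintegral_congr_ae ?_
          filter_upwards [Lp.coeFn_sub f (hg.toLp g), hg.coeFn_toLp] with x hfg hgx
          rw [hfg, Pi.sub_apply, hgx, hsub]
      _ = ∫⁻ x, ‖f x‖ₑ ∂μ := by
          rw [lintegral_indicator hS.compl, lintegral_const_mul' 2 _ ENNReal.ofNat_ne_top,
            ← hhalf, hnorm]
  · refine lintegral_congr_ae ?_
    filter_upwards [hg.coeFn_toLp] with x hgx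
    by_cases hx : x ∈ S <;> simp [hgx, g, hx]

lemma eq_zero_of_norm_add_eq_of_norm_sub_eq {H : Type*} [NormedAddCommGroup H]
    [InnerProductSpace ℝ H] {x y : H} (hadd : ‖x + y‖ = ‖y‖) (hsub : ‖x - y‖ = ‖y‖) : x = 0 := by
  have := parallelogram_law_with_norm ℝ x y
  rw [hadd, hsub] at this
  exact norm_eq_zero.1 (mul_self_eq_zero.1 (by linarith))

lemma IsMeasureAtom.exists_norm_indicatorConstLp_add_eq [MeasurableSpace E] [BorelSpace E]
    [SecondCountableTopology E] (hA : IsMeasureAtom μ A) (e : E) (g : Lp E 1 μ) :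
    ∃ (c : E) (r : ℝ),
      ‖indicatorConstLp 1 hA.measurableSet hA.measure_ne_top e + g‖ = ‖e + c‖ * μ.real A + r ∧
      ‖indicatorConstLp 1 hA.measurableSet hA.measure_ne_top e - g‖ = ‖e - c‖ * μ.real A + r ∧
      ‖g‖ = ‖c‖ * μ.real A + r := by
  set f := indicatorConstLp 1 hA.measurableSet hA.measure_ne_top e
  have : Nonempty E := ⟨0⟩
  obtain ⟨c, hc⟩ := hA.exists_ae_eq_const (Lp.stronglyMeasurable g).measurable
  have hf : ⇑f =ᵐ[μ] A.indicator fun _ => e := indicatorConstLp_coeFn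
  have hfA : ∀ᵐ x ∂μ.restrict A, f x = e := by
    filter_upwards [ae_restrict_of_ae hf, ae_restrict_mem hA.measurableSet] with x hx hxA
    rw [hx, indicator_of_mem hxA]
  have hfAc : ∀ᵐ x ∂μ.restrict Aᶜ, f x = 0 := by
    filter_upwards [ae_restrict_of_ae hf, ae_restrict_mem hA.measurableSet.compl] with x hx hxA
    rw [hx, indicator_of_notMem hxA]
  have hadd := ae_restrict_of_ae (s := A) (Lp.coeFn_add f g)
  have hadd' := ae_restrict_of_ae (s := Aᶜ) (Lp.coeFn_add f g)
  have hsub := ae_restrict_of_ae (s := A) (Lp.coeFn_sub f g)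
  have hsub' := ae_restrict_of_ae (s := Aᶜ) (Lp.coeFn_sub f g)
  refine ⟨c, ∫ x in Aᶜ, ‖g x‖ ∂μ, ?_, ?_, ?_⟩
  · refine Lp.norm_eq_of_ae_restrict_eq_const _ hA.measurableSet ?_ ?_
    · filter_upwards [hadd, hfA, hc] with x h hfx hgx
      rw [h, Pi.add_apply, hfx, hgx]
    · filter_upwards [hadd', hfAc] with x h hfx
      rw [h, Pi.add_apply, hfx, zero_add]
  · refine Lp.norm_eq_of_ae_restrict_eq_const _ hA.measurableSet ?_ ?_
    · filter_upwards [hsub, hfA, hc] with x h hfx hgx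
      rw [h, Pi.sub_apply, hfx, hgx]
    · filter_upwards [hsub', hfAc] with x h hfx
      rw [h, Pi.sub_apply, hfx, zero_sub, norm_neg]
  · exact Lp.norm_eq_of_ae_restrict_eq_const _ hA.measurableSet hc (ae_of_all _ fun _ => rfl)

lemma IsMeasureAtom.not_solvesNormEquation_indicatorConstLp [InnerProductSpace ℝ E]
    [MeasurableSpace E] [BorelSpace E] [SecondCountableTopology E] (hA : IsMeasureAtom μ A)
    {e : E} (he : e ≠ 0) (g : Lp E 1 μ) :
    ¬ SolvesNormEquation (indicatorConstLp 1 hA.measurableSet hA.measure_ne_top e) g := by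
  rintro ⟨hadd, hsub, hg⟩
  obtain ⟨c, r, h₁, h₂, h₃⟩ := hA.exists_norm_indicatorConstLp_add_eq e g
  have hfnorm : ‖indicatorConstLp 1 hA.measurableSet hA.measure_ne_top e‖ = ‖e‖ * μ.real A := by
    simp [norm_indicatorConstLp]
  rw [hfnorm] at hadd hsub hg
  have hm : 0 < μ.real A := ENNReal.toReal_pos hA.measure_ne_zero hA.measure_ne_top
  exact he (eq_zero_of_norm_add_eq_of_norm_sub_eq
    (mul_right_cancel₀ hm.ne' (by linarith)) (mul_right_cancel₀ hm.ne' (by linarith)))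

end L1

theorem norm_equation_solvable_iff_atomless_general {α : Type*} [MeasurableSpace α]
    (μ : Measure α) :
    (∀ f : Lp ℂ 1 μ, ∃ g : Lp ℂ 1 μ, ‖f + g‖ = ‖f‖ ∧ ‖f - g‖ = ‖f‖ ∧ ‖g‖ = ‖f‖) ↔
      (∀ A : Set α, ¬ IsMeasureAtom μ A) := by
  refine ⟨fun hsolv A hA => ?_, fun hμ f => ?_⟩
  · obtain ⟨g, hg⟩ := hsolv (indicatorConstLp 1 hA.measurableSet hA.measure_ne_top (1 : ℂ))
    exact hA.not_solvesNormEquation_indicatorConstLp one_ne_zero g hg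
  · obtain ⟨S, hS, hhalf⟩ := exists_setLIntegral_enorm_eq_compl hμ f
    exact exists_solvesNormEquation_of_setLIntegral_eq f hS hhalf

/-- For a nonzero σ-finite measure `μ`, the norm equation
`‖f + g‖₁ = ‖f - g‖₁ = ‖f‖₁ = ‖g‖₁` is solvable for every `f ∈ L¹(μ)`
if and only if `μ` is atomless. -/
theorem norm_equation_solvable_iff_atomless {α : Type*} [MeasurableSpace α]
    (μ : Measure α) [SigmaFinite μ] (hμ : μ ≠ 0) :
    (∀ f : Lp ℂ 1 μ, ∃ g : Lp ℂ 1 μ, ‖f + g‖ = ‖f‖ ∧ ‖f - g‖ = ‖f‖ ∧ ‖g‖ = ‖f‖) ↔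
      (∀ A : Set α, ¬ IsMeasureAtom μ A) :=
  norm_equation_solvable_iff_atomless_general μ
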